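/- Let H₀ be a nonzero real number and let v, w : ℝ → ℝ be continuous and 2π-periodic. Then (∫₀^{2π} [ (𝒟(sin∘v)(x) − C̃(v)/H₀) − (𝒟(sin∘w)(x) − C̃(w)/H₀) ]² dx)^{1/2} ≤ (1 + 4π/|H₀|) · (∫₀^{2π} (v(x) − w(x))² dx)^{1/2}; that is, the vector field of the integral form of the sine-Gordon equation is globally Lipschitz with respect to the L² norm. -/

import Mathlib

open Real intervalIntegral

/-- The mean value `f̄ = (1/(2π)) ∫₀^{2π} f(y) dy` of a `2π`-periodic function. -/
noncomputable def fmean (f : ℝ → ℝ) : ℝ := (1 / (2 * π)) * ∫ y in (0:ℝ)..(2 * π), f y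

/-- The antiderivative operator `𝒟`, the realization on continuous functions of the
maximal Tseng generalized inverse `∂ₓ†` of the spatial derivative on `𝕊 = ℝ/2πℤ`. -/
noncomputable def Dop (f : ℝ → ℝ) (x : ℝ) : ℝ :=
  (∫ y in (0:ℝ)..x, (f y - fmean f)) -
    (1 / (2 * π)) * ∫ z in (0:ℝ)..(2 * π), (∫ y in (0:ℝ)..z, (f y - fmean f))

/-- `C̃(v) = ∫₀^{2π} cos(v(x)) ⬝ 𝒟(sin∘v)(x) dx`. -/
noncomputable def Ctilde (v : ℝ → ℝ) : ℝ :=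
  ∫ x in (0:ℝ)..(2 * π), Real.cos (v x) * Dop (fun y => Real.sin (v y)) x

/-!
For continuous `g`, `𝒟g` is a primitive of `g - ḡ` with mean zero and `𝒟g(0) = 𝒟g(2π)`, so
Wirtinger's inequality (Parseval together with `ĝ'(n) = i n ĝ(n)`) gives
`‖𝒟g‖ ≤ ‖g - ḡ‖ ≤ ‖g‖` in `L²(0, 2π)`. Taking `g = sin ∘ v - sin ∘ w` and using that `sin` is
1-Lipschitz, the non-constant part of the vector field moves by at most `‖v - w‖`. The constant
part moves by `√(2π) |C̃(v) - C̃(w)| / |H₀|` in norm, and writing `C̃(v) - C̃(w)` as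
`∫ (cos v - cos w) 𝒟(sin v) + ∫ cos w · 𝒟(sin v - sin w)`, Cauchy–Schwarz with
`|sin|, |cos| ≤ 1` bounds it by `2 √(2π) ‖v - w‖`. Minkowski adds the two pieces.
-/

open MeasureTheory Set

section L2

variable {α : Type*} [MeasurableSpace α] {μ : Measure α} {f g : α → ℝ}

lemma MeasureTheory.MemLp.norm_toLp_eq_sqrt_integral_sq (hf : MemLp f 2 μ) :
    ‖hf.toLp f‖ = √(∫ a, f a ^ 2 ∂μ) := by
  have hsq : ‖hf.toLp f‖ ^ 2 = ∫ a, f a ^ 2 ∂μ := by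
    rw [← real_inner_self_eq_norm_sq, L2.inner_def]
    refine integral_congr_ae (hf.coeFn_toLp.mono fun a ha => ?_)
    simp [ha, sq]
  rw [← hsq, Real.sqrt_sq (norm_nonneg _)]

lemma abs_integral_mul_le_sqrt_mul_sqrt (hf : MemLp f 2 μ) (hg : MemLp g 2 μ) :
    |∫ a, f a * g a ∂μ| ≤ √(∫ a, f a ^ 2 ∂μ) * √(∫ a, g a ^ 2 ∂μ) := by
  rw [← hf.norm_toLp_eq_sqrt_integral_sq, ← hg.norm_toLp_eq_sqrt_integral_sq]
  convert abs_real_inner_le_norm (hf.toLp f) (hg.toLp g) using 2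
  rw [L2.inner_def]
  refine integral_congr_ae ((hf.coeFn_toLp.and hg.coeFn_toLp).mono fun a ha => ?_)
  simp [ha.1, ha.2, mul_comm]

lemma sqrt_integral_add_sq_le (hf : MemLp f 2 μ) (hg : MemLp g 2 μ) :
    √(∫ a, (f a + g a) ^ 2 ∂μ) ≤ √(∫ a, f a ^ 2 ∂μ) + √(∫ a, g a ^ 2 ∂μ) := by
  rw [← hf.norm_toLp_eq_sqrt_integral_sq, ← hg.norm_toLp_eq_sqrt_integral_sq]
  convert norm_add_le (hf.toLp f) (hg.toLp g)
  rw [← MemLp.toLp_add, MemLp.norm_toLp_eq_sqrt_integral_sq]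
  rfl

end L2

lemma ContinuousOn.memLp_restrict_Ioc {E : Type*} [NormedAddCommGroup E] {f : ℝ → E} {a b : ℝ}
    (hf : ContinuousOn f (Icc a b)) (p : ENNReal) : MemLp f p (volume.restrict (Ioc a b)) := by
  obtain ⟨C, hC⟩ := isCompact_Icc.exists_bound_of_continuousOn hf
  exact MemLp.of_bound ((hf.mono Ioc_subset_Icc_self).aestronglyMeasurable measurableSet_Ioc) C
    (ae_restrict_of_forall_mem measurableSet_Ioc fun x hx => hC x (Ioc_subset_Icc_self hx))

section Wirtinger

variable {a b : ℝ}

lemma norm_fourierCoeffOn_le_of_hasDerivAt (hab : a < b) {F F' : ℝ → ℂ} {n : ℤ} (hn : n ≠ 0)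
    (hF : ∀ x ∈ Icc a b, HasDerivAt F (F' x) x) (hF' : IntervalIntegrable F' volume a b)
    (hFab : F a = F b) :
    ‖fourierCoeffOn hab F n‖ ≤ (b - a) / (2 * π) * ‖fourierCoeffOn hab F' n‖ := by
  have hcoeff : fourierCoeffOn hab F n
      = (b - a) / (2 * π * Complex.I * n) * fourierCoeffOn hab F' n := by
    rw [fourierCoeffOn_of_hasDerivAt hab hn (by rwa [uIcc_of_le hab.le]) hF', hFab, sub_self,
      mul_zero, zero_sub]
    field_simp
  have hn1 : (1 : ℝ) ≤ |(n : ℝ)| := by exact_mod_cast Int.one_le_abs hn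
  rw [hcoeff, norm_mul, norm_div]
  gcongr
  · rw [← Complex.ofReal_sub, Complex.norm_real, Real.norm_of_nonneg (sub_pos.2 hab).le]
  · simp only [norm_mul, Complex.norm_ofNat, Complex.norm_real, Real.norm_of_nonneg pi_pos.le,
      Complex.norm_I, Complex.norm_intCast]
    nlinarith [pi_pos]

lemma fourierCoeffOn_ofReal_zero_of_integral_eq_zero (hab : a < b) {f : ℝ → ℝ}
    (hf : ∫ x in a..b, f x = 0) :
    fourierCoeffOn hab (fun x => (f x : ℂ)) 0 = 0 := by
  simp [fourierCoeffOn_eq_integral, integral_ofReal, hf]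

lemma hasSum_sq_fourierCoeffOn_ofReal (hab : a < b) {f : ℝ → ℝ} (hf : ContinuousOn f (Icc a b)) :
    HasSum (fun n => ‖fourierCoeffOn hab (fun x => (f x : ℂ)) n‖ ^ 2)
      ((b - a)⁻¹ * ∫ x in a..b, f x ^ 2) := by
  have hfℂ : ContinuousOn (fun x => (f x : ℂ)) (Icc a b) :=
    Complex.continuous_ofReal.comp_continuousOn hf
  convert hasSum_sq_fourierCoeffOn hab (hfℂ.memLp_restrict_Ioc 2) using 1
  simp only [Complex.norm_real, Real.norm_eq_abs, sq_abs, smul_eq_mul]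

theorem intervalIntegral_sq_le_of_hasDerivAt (hab : a < b) {G g : ℝ → ℝ}
    (hG : ∀ x ∈ Icc a b, HasDerivAt G (g x) x) (hg : ContinuousOn g (Icc a b))
    (hGab : G a = G b) (hG₀ : ∫ x in a..b, G x = 0) :
    ∫ x in a..b, G x ^ 2 ≤ ((b - a) / (2 * π)) ^ 2 * ∫ x in a..b, g x ^ 2 := by
  set c := (b - a) / (2 * π)
  have hcoeff : ∀ n, ‖fourierCoeffOn hab (fun x => (G x : ℂ)) n‖ ^ 2
      ≤ c ^ 2 * ‖fourierCoeffOn hab (fun x => (g x : ℂ)) n‖ ^ 2 := by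
    intro n
    rcases eq_or_ne n 0 with rfl | hn
    · rw [fourierCoeffOn_ofReal_zero_of_integral_eq_zero hab hG₀, norm_zero, zero_pow two_ne_zero]
      positivity
    · have hgℂ : ContinuousOn (fun x => (g x : ℂ)) (uIcc a b) := by
        rw [uIcc_of_le hab.le]; exact Complex.continuous_ofReal.comp_continuousOn hg
      rw [← mul_pow]
      gcongr
      exact norm_fourierCoeffOn_le_of_hasDerivAt hab hn (fun x hx => (hG x hx).ofReal_comp)
        hgℂ.intervalIntegrable (by rw [hGab])
  have hGcont : ContinuousOn G (Icc a b) :=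
    fun x hx => (hG x hx).continuousAt.continuousWithinAt
  have hParseval := hasSum_le hcoeff (hasSum_sq_fourierCoeffOn_ofReal hab hGcont)
    ((hasSum_sq_fourierCoeffOn_ofReal hab hg).mul_left (c ^ 2))
  have hba : 0 < b - a := sub_pos.2 hab
  calc ∫ x in a..b, G x ^ 2 = (b - a) * ((b - a)⁻¹ * ∫ x in a..b, G x ^ 2) := by field_simp
    _ ≤ (b - a) * (c ^ 2 * ((b - a)⁻¹ * ∫ x in a..b, g x ^ 2)) := by gcongr
    _ = c ^ 2 * ∫ x in a..b, g x ^ 2 := by field_simp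

end Wirtinger

section IntervalL2

variable {a b : ℝ} {f g : ℝ → ℝ}

lemma abs_intervalIntegral_mul_le (hab : a ≤ b) (hf : Continuous f) (hg : Continuous g) :
    |∫ x in a..b, f x * g x| ≤ √(∫ x in a..b, f x ^ 2) * √(∫ x in a..b, g x ^ 2) := by
  simp only [integral_of_le hab]
  exact abs_integral_mul_le_sqrt_mul_sqrt (hf.continuousOn.memLp_restrict_Ioc 2)
    (hg.continuousOn.memLp_restrict_Ioc 2)

lemma sqrt_intervalIntegral_add_sq_le (hab : a ≤ b) (hf : Continuous f) (hg : Continuous g) :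
    √(∫ x in a..b, (f x + g x) ^ 2) ≤ √(∫ x in a..b, f x ^ 2) + √(∫ x in a..b, g x ^ 2) := by
  simp only [integral_of_le hab]
  exact sqrt_integral_add_sq_le (hf.continuousOn.memLp_restrict_Ioc 2)
    (hg.continuousOn.memLp_restrict_Ioc 2)

lemma intervalIntegral_sq_le_of_abs_le (hab : a ≤ b) (hf : Continuous f) (hg : Continuous g)
    (h : ∀ x, |f x| ≤ |g x|) : ∫ x in a..b, f x ^ 2 ≤ ∫ x in a..b, g x ^ 2 :=
  integral_mono_on hab ((hf.pow 2).intervalIntegrable _ _) ((hg.pow 2).intervalIntegrable _ _)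
    fun x _ => sq_le_sq.2 (h x)

lemma intervalIntegral_sq_comp_sub_le {φ : ℝ → ℝ} (hφ : LipschitzWith 1 φ) (hab : a ≤ b)
    (hf : Continuous f) (hg : Continuous g) :
    ∫ x in a..b, (φ (f x) - φ (g x)) ^ 2 ≤ ∫ x in a..b, (f x - g x) ^ 2 :=
  intervalIntegral_sq_le_of_abs_le hab ((hφ.continuous.comp hf).sub (hφ.continuous.comp hg))
    (hf.sub hg) fun x => by simpa [Real.dist_eq] using hφ.dist_le_mul (f x) (g x)

end IntervalL2

section Dop

variable {f g : ℝ → ℝ}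

lemma integral_sub_fmean_eq_zero (hf : Continuous f) :
    ∫ y in (0:ℝ)..(2 * π), (f y - fmean f) = 0 := by
  rw [integral_sub (hf.intervalIntegrable _ _) intervalIntegrable_const,
    intervalIntegral.integral_const, fmean, sub_zero, smul_eq_mul]
  field_simp
  ring

lemma hasDerivAt_Dop (hf : Continuous f) (x : ℝ) : HasDerivAt (Dop f) (f x - fmean f) x :=
  ((hf.sub continuous_const).integral_hasStrictDerivAt 0 x).hasDerivAt.sub_const _

lemma continuous_Dop (hf : Continuous f) : Continuous (Dop f) :=
  continuous_iff_continuousAt.2 fun x => (hasDerivAt_Dop hf x).continuousAt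

lemma Dop_two_pi (hf : Continuous f) : Dop f (2 * π) = Dop f 0 := by
  simp [Dop, integral_sub_fmean_eq_zero hf]

lemma integral_Dop_eq_zero (hf : Continuous f) : ∫ x in (0:ℝ)..(2 * π), Dop f x = 0 := by
  have hprim : Continuous fun z => ∫ y in (0:ℝ)..z, (f y - fmean f) :=
    continuous_primitive (fun _ _ => (hf.sub continuous_const).intervalIntegrable _ _) 0
  unfold Dop
  rw [integral_sub (hprim.intervalIntegrable _ _) intervalIntegrable_const,
    intervalIntegral.integral_const, sub_zero, smul_eq_mul]
  field_simp
  ring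

lemma fmean_sub (hf : Continuous f) (hg : Continuous g) :
    fmean (fun x => f x - g x) = fmean f - fmean g := by
  rw [fmean, fmean, fmean, integral_sub (hf.intervalIntegrable _ _) (hg.intervalIntegrable _ _),
    mul_sub]

lemma Dop_sub (hf : Continuous f) (hg : Continuous g) (x : ℝ) :
    Dop (fun y => f y - g y) x = Dop f x - Dop g x := by
  have hf' : Continuous fun y => f y - fmean f := hf.sub continuous_const
  have hg' : Continuous fun y => g y - fmean g := hg.sub continuous_const
  have hprim : ∀ z, ∫ y in (0:ℝ)..z, (f y - g y - fmean fun y => f y - g y)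
      = (∫ y in (0:ℝ)..z, (f y - fmean f)) - ∫ y in (0:ℝ)..z, (g y - fmean g) := fun z => by
    rw [← integral_sub (hf'.intervalIntegrable _ _) (hg'.intervalIntegrable _ _), fmean_sub hf hg]
    congr 1 with y
    ring
  have hcont : ∀ {h : ℝ → ℝ}, Continuous h → Continuous fun z => ∫ y in (0:ℝ)..z, h y :=
    fun hh => continuous_primitive (fun _ _ => hh.intervalIntegrable _ _) 0
  simp only [Dop, hprim]
  rw [integral_sub ((hcont hf').intervalIntegrable _ _) ((hcont hg').intervalIntegrable _ _)]
  ring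

lemma intervalIntegral_sub_fmean_sq_le (hf : Continuous f) :
    ∫ x in (0:ℝ)..(2 * π), (f x - fmean f) ^ 2 ≤ ∫ x in (0:ℝ)..(2 * π), f x ^ 2 := by
  set c := fmean f
  have hmean : ∫ x in (0:ℝ)..(2 * π), f x = 2 * π * c := by
    simp only [c, fmean]
    field_simp
  have hgap : (∫ x in (0:ℝ)..(2 * π), f x ^ 2) - ∫ x in (0:ℝ)..(2 * π), (f x - c) ^ 2
      = 2 * π * c ^ 2 := by
    rw [← integral_sub (f := fun x => f x ^ 2) (g := fun x => (f x - c) ^ 2)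
      ((hf.pow 2).intervalIntegrable _ _)
      (((hf.sub continuous_const).pow 2).intervalIntegrable _ _)]
    have hpoint : ∀ x, f x ^ 2 - (f x - c) ^ 2 = 2 * c * f x - c ^ 2 := fun x => by ring
    simp only [hpoint]
    rw [integral_sub ((hf.const_mul _).intervalIntegrable _ _) intervalIntegrable_const,
      intervalIntegral.integral_const_mul, intervalIntegral.integral_const, hmean, smul_eq_mul]
    ring
  nlinarith [sq_nonneg c, two_pi_pos]

lemma intervalIntegral_Dop_sq_le (hf : Continuous f) :
    ∫ x in (0:ℝ)..(2 * π), Dop f x ^ 2 ≤ ∫ x in (0:ℝ)..(2 * π), f x ^ 2 := by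
  have hwirtinger := intervalIntegral_sq_le_of_hasDerivAt two_pi_pos
    (fun x _ => hasDerivAt_Dop hf x) (hf.sub continuous_const).continuousOn
    (Dop_two_pi hf).symm (integral_Dop_eq_zero hf)
  rw [sub_zero, div_self two_pi_pos.ne', one_pow, one_mul] at hwirtinger
  exact hwirtinger.trans (intervalIntegral_sub_fmean_sq_le hf)

end Dop

section SineGordon

variable {v w : ℝ → ℝ}

lemma sqrt_intervalIntegral_sq_le_of_abs_le_one {f : ℝ → ℝ} (hf : Continuous f)
    (h : ∀ x, |f x| ≤ 1) : √(∫ x in (0:ℝ)..(2 * π), f x ^ 2) ≤ √(2 * π) := by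
  have := intervalIntegral_sq_le_of_abs_le (g := fun _ => 1) two_pi_pos.le hf continuous_const
    (by simpa using h)
  simpa using sqrt_le_sqrt this

lemma intervalIntegral_sq_Dop_sin_sub_le (hv : Continuous v) (hw : Continuous w) :
    ∫ x in (0:ℝ)..(2 * π), (Dop (fun y => sin (v y)) x - Dop (fun y => sin (w y)) x) ^ 2
      ≤ ∫ x in (0:ℝ)..(2 * π), (v x - w x) ^ 2 := by
  have hsv : Continuous fun y => sin (v y) := continuous_sin.comp hv
  have hsw : Continuous fun y => sin (w y) := continuous_sin.comp hw
  simp only [← Dop_sub hsv hsw]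
  exact (intervalIntegral_Dop_sq_le (hsv.sub hsw)).trans
    (intervalIntegral_sq_comp_sub_le lipschitzWith_sin two_pi_pos.le hv hw)

lemma abs_Ctilde_sub_le (hv : Continuous v) (hw : Continuous w) :
    |Ctilde v - Ctilde w| ≤ 2 * √(2 * π) * √(∫ x in (0:ℝ)..(2 * π), (v x - w x) ^ 2) := by
  set N := √(∫ x in (0:ℝ)..(2 * π), (v x - w x) ^ 2)
  set Dv := Dop fun y => sin (v y)
  set Dw := Dop fun y => sin (w y)
  have hsv : Continuous fun y => sin (v y) := continuous_sin.comp hv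
  have hsw : Continuous fun y => sin (w y) := continuous_sin.comp hw
  have hcv : Continuous fun y => cos (v y) := continuous_cos.comp hv
  have hcw : Continuous fun y => cos (w y) := continuous_cos.comp hw
  have hDv : Continuous Dv := continuous_Dop hsv
  have hDvw : Continuous fun x => Dv x - Dw x := hDv.sub (continuous_Dop hsw)
  have hsplit : Ctilde v - Ctilde w = (∫ x in (0:ℝ)..(2 * π), (cos (v x) - cos (w x)) * Dv x)
      + ∫ x in (0:ℝ)..(2 * π), cos (w x) * (Dv x - Dw x) := by
    rw [Ctilde, Ctilde, ← integral_sub (f := fun x => cos (v x) * Dv x)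
      (g := fun x => cos (w x) * Dw x) ((hcv.mul hDv).intervalIntegrable _ _)
      ((hcw.mul (continuous_Dop hsw)).intervalIntegrable _ _),
      ← integral_add (f := fun x => (cos (v x) - cos (w x)) * Dv x)
      (g := fun x => cos (w x) * (Dv x - Dw x)) (((hcv.sub hcw).mul hDv).intervalIntegrable _ _)
      ((hcw.mul hDvw).intervalIntegrable _ _)]
    congr 1 with x
    ring
  have hfirst : |∫ x in (0:ℝ)..(2 * π), (cos (v x) - cos (w x)) * Dv x| ≤ N * √(2 * π) :=
    (abs_intervalIntegral_mul_le two_pi_pos.le (hcv.sub hcw) hDv).trans <|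
      mul_le_mul (sqrt_le_sqrt (intervalIntegral_sq_comp_sub_le lipschitzWith_cos
        two_pi_pos.le hv hw))
      ((sqrt_le_sqrt (intervalIntegral_Dop_sq_le hsv)).trans
        (sqrt_intervalIntegral_sq_le_of_abs_le_one hsv fun x => abs_sin_le_one _))
      (sqrt_nonneg _) (sqrt_nonneg _)
  have hsecond : |∫ x in (0:ℝ)..(2 * π), cos (w x) * (Dv x - Dw x)| ≤ √(2 * π) * N :=
    (abs_intervalIntegral_mul_le two_pi_pos.le hcw hDvw).trans <|
      mul_le_mul (sqrt_intervalIntegral_sq_le_of_abs_le_one hcw fun x => abs_cos_le_one _)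
      (sqrt_le_sqrt (intervalIntegral_sq_Dop_sin_sub_le hv hw)) (sqrt_nonneg _) (sqrt_nonneg _)
  calc |Ctilde v - Ctilde w| ≤ N * √(2 * π) + √(2 * π) * N :=
        hsplit ▸ (abs_add_le _ _).trans (add_le_add hfirst hsecond)
    _ = 2 * √(2 * π) * N := by ring

lemma sqrt_intervalIntegral_Ctilde_sub_div_sq_le (H₀ : ℝ) (hv : Continuous v)
    (hw : Continuous w) :
    √(∫ _ in (0:ℝ)..(2 * π), ((Ctilde w - Ctilde v) / H₀) ^ 2)
      ≤ 4 * π / |H₀| * √(∫ x in (0:ℝ)..(2 * π), (v x - w x) ^ 2) := by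
  set N := √(∫ x in (0:ℝ)..(2 * π), (v x - w x) ^ 2)
  rw [intervalIntegral.integral_const, smul_eq_mul, sub_zero, sqrt_mul two_pi_pos.le,
    sqrt_sq_eq_abs, abs_div, abs_sub_comm]
  calc √(2 * π) * (|Ctilde v - Ctilde w| / |H₀|)
      ≤ √(2 * π) * (2 * √(2 * π) * N / |H₀|) := by gcongr; exact abs_Ctilde_sub_le hv hw
    _ = √(2 * π) * √(2 * π) * (2 * N / |H₀|) := by ring
    _ = 4 * π / |H₀| * N := by rw [mul_self_sqrt two_pi_pos.le]; ring

end SineGordon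

theorem sineGordon_vector_field_lipschitz_general (H₀ : ℝ) (v w : ℝ → ℝ)
    (hv : Continuous v) (hw : Continuous w) :
    Real.sqrt (∫ x in (0:ℝ)..(2 * π),
        ((Dop (fun y => Real.sin (v y)) x - Ctilde v / H₀) -
          (Dop (fun y => Real.sin (w y)) x - Ctilde w / H₀)) ^ 2) ≤
      (1 + 4 * π / |H₀|) * Real.sqrt (∫ x in (0:ℝ)..(2 * π), (v x - w x) ^ 2) := by
  set N := √(∫ x in (0:ℝ)..(2 * π), (v x - w x) ^ 2)
  set Dv := Dop fun y => sin (v y)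
  set Dw := Dop fun y => sin (w y)
  set c := (Ctilde w - Ctilde v) / H₀
  have hDvw : Continuous fun x => Dv x - Dw x :=
    (continuous_Dop (continuous_sin.comp hv)).sub (continuous_Dop (continuous_sin.comp hw))
  calc √(∫ x in (0:ℝ)..(2 * π), ((Dv x - Ctilde v / H₀) - (Dw x - Ctilde w / H₀)) ^ 2)
      = √(∫ x in (0:ℝ)..(2 * π), ((Dv x - Dw x) + c) ^ 2) := by
        congr 1
        refine integral_congr fun x _ => ?_
        ring
    _ ≤ √(∫ x in (0:ℝ)..(2 * π), (Dv x - Dw x) ^ 2) + √(∫ _ in (0:ℝ)..(2 * π), c ^ 2) :=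
        sqrt_intervalIntegral_add_sq_le two_pi_pos.le hDvw continuous_const
    _ ≤ N + 4 * π / |H₀| * N :=
        add_le_add (sqrt_le_sqrt (intervalIntegral_sq_Dop_sin_sub_le hv hw))
          (sqrt_intervalIntegral_Ctilde_sub_div_sq_le H₀ hv hw)
    _ = (1 + 4 * π / |H₀|) * N := by ring

/-- The vector field `v ↦ 𝒟(sin∘v) − C̃(v)/H₀` of the integral form of the sine-Gordon
equation is globally Lipschitz in the `L²(0,2π)` norm, with constant `1 + 4π/|H₀|`. -/
theorem sineGordon_vector_field_lipschitz (H₀ : ℝ) (hH₀ : H₀ ≠ 0) (v w : ℝ → ℝ)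
    (hv : Continuous v) (hvp : Function.Periodic v (2 * π))
    (hw : Continuous w) (hwp : Function.Periodic w (2 * π)) :
    Real.sqrt (∫ x in (0:ℝ)..(2 * π),
        ((Dop (fun y => Real.sin (v y)) x - Ctilde v / H₀) -
          (Dop (fun y => Real.sin (w y)) x - Ctilde w / H₀)) ^ 2) ≤
      (1 + 4 * π / |H₀|) * Real.sqrt (∫ x in (0:ℝ)..(2 * π), (v x - w x) ^ 2) :=
  sineGordon_vector_field_lipschitz_general H₀ v w hv hw
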